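/- arXiv:2112.08465 — 3 statements merged into one kernel-verified Lean document; each statement's English description precedes it below -/
import Mathlib

section
/- Let (V,⟨·,·⟩) be a 3-dimensional real inner product space and let R be an algebraic curvature tensor on V having 3-positive curvature operator of the second kind. Then the scalar curvature S of R is positive, and Ric(v,v) > S/12 for every unit vector v ∈ V. -/
/-!
Everything in sight (traces, Ricci and scalar curvature, the inner product of forms and `R̊`) is
independent of the orthonormal basis, so for a unit vector `v` one may work in an orthonormal basis
`e₀ = v, e₁, e₂`. With `Kᵢⱼ = R(eᵢ,eⱼ,eᵢ,eⱼ)`, the orthonormal traceless symmetric forms with matrices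
`diag(-2,1,1)/√6`, `(E₀₁ + E₁₀)/√2`, `(E₀₂ + E₂₀)/√2` have `R̊`-values summing to
`(5(K₀₁ + K₀₂) - K₁₂)/3`, which is positive by 3-positivity. As `Ric(v,v) = K₀₁ + K₀₂` and
`S = 2(K₀₁ + K₀₂ + K₁₂)`, this is `Ric(v,v) > S/12`; summing it over a basis gives `S/4 < S`.
-/

open scoped RealInnerProductSpace

variable {V : Type*} [NormedAddCommGroup V] [InnerProductSpace ℝ V]

/-- `R` is an algebraic curvature tensor: antisymmetric in the first two slots,
symmetric under exchange of the first and second pairs, and satisfying the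
first Bianchi identity. -/
def IsAlgCurvatureTensor (R : V →ₗ[ℝ] V →ₗ[ℝ] V →ₗ[ℝ] V →ₗ[ℝ] ℝ) : Prop :=
  (∀ x y z w : V, R x y z w = - R y x z w) ∧
  (∀ x y z w : V, R x y z w = R z w x y) ∧
  (∀ x y z w : V, R x y z w + R y z x w + R z x y w = 0)

/-- The Ricci curvature `Ric(x,y) = Σ_j R(x,e_j,y,e_j)` with respect to an
orthonormal basis. -/
noncomputable def ricci {n : ℕ} (b : OrthonormalBasis (Fin n) ℝ V)
    (R : V →ₗ[ℝ] V →ₗ[ℝ] V →ₗ[ℝ] V →ₗ[ℝ] ℝ) (x y : V) : ℝ :=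
  ∑ j, R x (b j) y (b j)

/-- The scalar curvature `S = Σ_{i,j} R_{ijij}`. -/
noncomputable def scalarCurv {n : ℕ} (b : OrthonormalBasis (Fin n) ℝ V)
    (R : V →ₗ[ℝ] V →ₗ[ℝ] V →ₗ[ℝ] V →ₗ[ℝ] ℝ) : ℝ :=
  ∑ i, ∑ j, R (b i) (b j) (b i) (b j)

/-- `φ` is a symmetric bilinear form which is traceless with respect to the
orthonormal basis `b`. -/
def IsTracelessSymForm {n : ℕ} (b : OrthonormalBasis (Fin n) ℝ V)
    (φ : V →ₗ[ℝ] V →ₗ[ℝ] ℝ) : Prop :=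
  (∀ x y : V, φ x y = φ y x) ∧ (∑ i, φ (b i) (b i) = 0)

/-- The inner product `⟨φ,ψ⟩ = Σ_{i,j} φ(e_i,e_j) ψ(e_i,e_j)` of bilinear forms. -/
noncomputable def formInner {n : ℕ} (b : OrthonormalBasis (Fin n) ℝ V)
    (φ ψ : V →ₗ[ℝ] V →ₗ[ℝ] ℝ) : ℝ :=
  ∑ i, ∑ j, φ (b i) (b j) * ψ (b i) (b j)

/-- The curvature operator of the second kind
`R̊(φ,ψ) = Σ_{i,j,k,l} R_{ijkl} φ(e_i,e_l) ψ(e_j,e_k)`. -/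
noncomputable def secondKind {n : ℕ} (b : OrthonormalBasis (Fin n) ℝ V)
    (R : V →ₗ[ℝ] V →ₗ[ℝ] V →ₗ[ℝ] V →ₗ[ℝ] ℝ)
    (φ ψ : V →ₗ[ℝ] V →ₗ[ℝ] ℝ) : ℝ :=
  ∑ i, ∑ j, ∑ k, ∑ l,
    R (b i) (b j) (b k) (b l) * φ (b i) (b l) * ψ (b j) (b k)

/-- `R` has `k`-nonnegative curvature operator of the second kind:
`Σ_{a=1}^k R̊(φ_a,φ_a) ≥ 0` for every orthonormal `k`-tuple of traceless
symmetric bilinear forms. -/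
def kNonnegSecondKind {n : ℕ} (b : OrthonormalBasis (Fin n) ℝ V)
    (R : V →ₗ[ℝ] V →ₗ[ℝ] V →ₗ[ℝ] V →ₗ[ℝ] ℝ) (k : ℕ) : Prop :=
  ∀ φ : Fin k → (V →ₗ[ℝ] V →ₗ[ℝ] ℝ),
    (∀ a, IsTracelessSymForm b (φ a)) →
    (∀ a a', formInner b (φ a) (φ a') = if a = a' then 1 else 0) →
    0 ≤ ∑ a, secondKind b R (φ a) (φ a)

/-- `R` has `k`-positive curvature operator of the second kind:
`Σ_{a=1}^k R̊(φ_a,φ_a) > 0` for every orthonormal `k`-tuple of traceless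
symmetric bilinear forms. -/
def kPosSecondKind {n : ℕ} (b : OrthonormalBasis (Fin n) ℝ V)
    (R : V →ₗ[ℝ] V →ₗ[ℝ] V →ₗ[ℝ] V →ₗ[ℝ] ℝ) (k : ℕ) : Prop :=
  ∀ φ : Fin k → (V →ₗ[ℝ] V →ₗ[ℝ] ℝ),
    (∀ a, IsTracelessSymForm b (φ a)) →
    (∀ a a', formInner b (φ a) (φ a') = if a = a' then 1 else 0) →
    0 < ∑ a, secondKind b R (φ a) (φ a)

namespace OrthonormalBasis

variable {ι κ : Type*} [Fintype ι] [Fintype κ]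

/-- Both sides are `B` applied to the canonical tensor `∑ i, b i ⊗ b i`. -/
theorem sum_apply_apply_self_eq (b : OrthonormalBasis ι ℝ V) (c : OrthonormalBasis κ ℝ V)
    (B : V →ₗ[ℝ] V →ₗ[ℝ] ℝ) : ∑ i, B (b i) (b i) = ∑ k, B (c k) (c k) := by
  have : FiniteDimensional ℝ V := b.toBasis.finiteDimensional_of_finite
  simpa using congrArg (TensorProduct.lift B)
    ((InnerProductSpace.canonicalCovariantTensor_eq_sum V b).symm.trans
      (InnerProductSpace.canonicalCovariantTensor_eq_sum V c))

theorem sum_sum_mul_eq (b : OrthonormalBasis ι ℝ V) (c : OrthonormalBasis κ ℝ V)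
    (A B : V →ₗ[ℝ] V →ₗ[ℝ] ℝ) :
    ∑ i, ∑ j, A (b i) (b j) * B (b i) (b j) = ∑ k, ∑ l, A (c k) (c l) * B (c k) (c l) := by
  calc ∑ i, ∑ j, A (b i) (b j) * B (b i) (b j)
      = ∑ i, ∑ l, A (b i) (c l) * B (b i) (c l) := by
        refine Finset.sum_congr rfl fun i _ => ?_
        simpa using sum_apply_apply_self_eq b c ((A (b i)).smulRight (B (b i)))
    _ = ∑ l, ∑ k, A (c k) (c l) * B (c k) (c l) := by
        rw [Finset.sum_comm]
        refine Finset.sum_congr rfl fun l _ => ?_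
        simpa using sum_apply_apply_self_eq b c ((A.flip (c l)).smulRight (B.flip (c l)))
    _ = _ := Finset.sum_comm

theorem exists_apply_eq (b : OrthonormalBasis ι ℝ V) (i : ι) {v : V} (hv : ‖v‖ = 1) :
    ∃ c : OrthonormalBasis ι ℝ V, c i = v := by
  have : FiniteDimensional ℝ V := b.toBasis.finiteDimensional_of_finite
  have hs : Orthonormal ℝ (({i} : Set ι).domRestrict fun _ => v) :=
    orthonormal_subsingleton_iff.2 fun _ => hv
  obtain ⟨c, hc⟩ := hs.exists_orthonormalBasis_extension_of_card_eq
    (Module.finrank_eq_card_basis b.toBasis)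
  exact ⟨c, hc i rfl⟩

end OrthonormalBasis

section BasisChange

variable {n m : ℕ} (b : OrthonormalBasis (Fin n) ℝ V) (c : OrthonormalBasis (Fin m) ℝ V)
  (R : V →ₗ[ℝ] V →ₗ[ℝ] V →ₗ[ℝ] V →ₗ[ℝ] ℝ)

theorem ricci_basis_change (x y : V) : ricci b R x y = ricci c R x y :=
  b.sum_apply_apply_self_eq c ((R x).flip y)

theorem scalarCurv_basis_change : scalarCurv b R = scalarCurv c R := by
  calc scalarCurv b R = ∑ i, ∑ l, R (b i) (c l) (b i) (c l) :=
        Finset.sum_congr rfl fun i _ => ricci_basis_change b c R (b i) (b i)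
    _ = ∑ l, ∑ k, R (c k) (c l) (c k) (c l) := by
        rw [Finset.sum_comm]
        refine Finset.sum_congr rfl fun l _ => ?_
        simpa using b.sum_apply_apply_self_eq c ((R.flip (c l)).compr₂ (LinearMap.applyₗ (c l)))
    _ = scalarCurv c R := Finset.sum_comm

theorem formInner_basis_change (φ ψ : V →ₗ[ℝ] V →ₗ[ℝ] ℝ) :
    formInner b φ ψ = formInner c φ ψ :=
  b.sum_sum_mul_eq c φ ψ

theorem isTracelessSymForm_basis_change (φ : V →ₗ[ℝ] V →ₗ[ℝ] ℝ) :
    IsTracelessSymForm b φ ↔ IsTracelessSymForm c φ := by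
  rw [IsTracelessSymForm, IsTracelessSymForm, b.sum_apply_apply_self_eq c]

theorem secondKind_eq_sum_sum (φ ψ : V →ₗ[ℝ] V →ₗ[ℝ] ℝ) :
    secondKind b R φ ψ =
      ∑ i, ∑ l, φ (b i) (b l) * ∑ j, ∑ k, R (b i) (b j) (b k) (b l) * ψ (b j) (b k) := by
  refine Finset.sum_congr rfl fun i _ => ?_
  simp only [Finset.mul_sum]
  refine (Finset.sum_congr rfl fun j _ => Finset.sum_comm).trans (Finset.sum_comm.trans ?_)
  exact Finset.sum_congr rfl fun l _ => Finset.sum_congr rfl fun j _ =>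
    Finset.sum_congr rfl fun k _ => by ring

theorem secondKind_basis_change (φ ψ : V →ₗ[ℝ] V →ₗ[ℝ] ℝ) :
    secondKind b R φ ψ = secondKind c R φ ψ := by
  let G : V →ₗ[ℝ] V →ₗ[ℝ] ℝ := ∑ j, ∑ k, ψ (c j) (c k) • (R.flip (c j)).flip (c k)
  have hb : ∀ x w, ∑ j, ∑ k, R x (b j) (b k) w * ψ (b j) (b k) = G x w := by
    intro x w
    simpa [G, LinearMap.sum_apply, mul_comm] using
      b.sum_sum_mul_eq c ((R x).compr₂ (LinearMap.applyₗ w)) ψ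
  have hc : ∀ x w, ∑ j, ∑ k, R x (c j) (c k) w * ψ (c j) (c k) = G x w := by
    simp [G, LinearMap.sum_apply, mul_comm]
  simp only [secondKind_eq_sum_sum, hb, hc]
  exact b.sum_sum_mul_eq c φ G

theorem kPosSecondKind_basis_change (k : ℕ) :
    kPosSecondKind b R k ↔ kPosSecondKind c R k := by
  simp only [kPosSecondKind, isTracelessSymForm_basis_change b c, formInner_basis_change b c,
    secondKind_basis_change b c]

end BasisChange

section MatrixForms

variable {n : ℕ} (c : OrthonormalBasis (Fin n) ℝ V)

theorem isTracelessSymForm_toBilin {M : Matrix (Fin n) (Fin n) ℝ} (hM : M.IsSymm)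
    (htr : M.trace = 0) : IsTracelessSymForm c (M.toBilin c.toBasis) :=
  ⟨LinearMap.BilinForm.isSymm_def.1 ((Matrix.isSymm_toBilin_iff_isSymm _).2 hM),
    by simpa [Matrix.trace] using htr⟩

theorem formInner_toBilin (M N : Matrix (Fin n) (Fin n) ℝ) :
    formInner c (M.toBilin c.toBasis) (N.toBilin c.toBasis) = ∑ i, ∑ j, M i j * N i j := by
  simp [formInner]

theorem secondKind_toBilin (R : V →ₗ[ℝ] V →ₗ[ℝ] V →ₗ[ℝ] V →ₗ[ℝ] ℝ)
    (M N : Matrix (Fin n) (Fin n) ℝ) :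
    secondKind c R (M.toBilin c.toBasis) (N.toBilin c.toBasis) =
      ∑ i, ∑ j, ∑ k, ∑ l, R (c i) (c j) (c k) (c l) * M i l * N j k := by
  simp [secondKind]

end MatrixForms

namespace IsAlgCurvatureTensor

variable {R : V →ₗ[ℝ] V →ₗ[ℝ] V →ₗ[ℝ] V →ₗ[ℝ] ℝ} (hR : IsAlgCurvatureTensor R)
include hR

theorem apply_swap_right (x y z w : V) : R x y w z = -R x y z w := by
  rw [hR.2.1, hR.1, ← hR.2.1]

theorem apply_swap_swap (x y z w : V) : R y x w z = R x y z w := by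
  rw [hR.1, hR.apply_swap_right, neg_neg]

@[simp] theorem apply_self_left (x z w : V) : R x x z w = 0 := by
  linarith [hR.1 x x z w]

@[simp] theorem apply_self_right (x y z : V) : R x y z z = 0 := by
  linarith [hR.apply_swap_right x y z z]

end IsAlgCurvatureTensor

noncomputable def testMatrices : Fin 3 → Matrix (Fin 3) (Fin 3) ℝ :=
  ![(√6)⁻¹ • !![-2, 0, 0; 0, 1, 0; 0, 0, 1],
    (√2)⁻¹ • !![0, 1, 0; 1, 0, 0; 0, 0, 0],
    (√2)⁻¹ • !![0, 0, 1; 0, 0, 0; 1, 0, 0]]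

theorem testMatrices_isSymm (a : Fin 3) : (testMatrices a).IsSymm := by
  refine Matrix.IsSymm.ext fun i j => ?_
  fin_cases a <;> fin_cases i <;> fin_cases j <;> simp [testMatrices]

theorem testMatrices_trace (a : Fin 3) : (testMatrices a).trace = 0 := by
  fin_cases a <;> simp [testMatrices, Matrix.trace, Fin.sum_univ_three]
  ring

theorem testMatrices_orthonormal (a a' : Fin 3) :
    ∑ i, ∑ j, testMatrices a i j * testMatrices a' i j = if a = a' then 1 else 0 := by
  fin_cases a <;> fin_cases a' <;> simp [testMatrices, Fin.sum_univ_three] <;> ring_nf <;> simp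

section Dim3

variable (c : OrthonormalBasis (Fin 3) ℝ V) {R : V →ₗ[ℝ] V →ₗ[ℝ] V →ₗ[ℝ] V →ₗ[ℝ] ℝ}
  (hR : IsAlgCurvatureTensor R)
include hR

theorem sum_secondKind_testMatrices :
    ∑ a, secondKind c R ((testMatrices a).toBilin c.toBasis) ((testMatrices a).toBilin c.toBasis)
      = (5 * (R (c 0) (c 1) (c 0) (c 1) + R (c 0) (c 2) (c 0) (c 2))
          - R (c 1) (c 2) (c 1) (c 2)) / 3 := by
  have swap_right (i j : Fin 3) := hR.apply_swap_right (c i) (c j) (c i) (c j)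
  have swap_swap (i j : Fin 3) := hR.apply_swap_swap (c i) (c j) (c i) (c j)
  simp [secondKind_toBilin, Fin.sum_univ_three, testMatrices, hR, swap_right,
    swap_swap 0 1, swap_swap 0 2, swap_swap 1 2]
  ring_nf
  norm_num
  ring

theorem ricci_apply_zero_zero :
    ricci c R (c 0) (c 0) = R (c 0) (c 1) (c 0) (c 1) + R (c 0) (c 2) (c 0) (c 2) := by
  simp [ricci, Fin.sum_univ_three, hR]

theorem scalarCurv_fin_three :
    scalarCurv c R = 2 * (R (c 0) (c 1) (c 0) (c 1) + R (c 0) (c 2) (c 0) (c 2)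
      + R (c 1) (c 2) (c 1) (c 2)) := by
  simp [scalarCurv, Fin.sum_univ_three, hR, hR.apply_swap_swap (c 0) (c 1),
    hR.apply_swap_swap (c 0) (c 2), hR.apply_swap_swap (c 1) (c 2)]
  ring

theorem sectional_lt_of_kPosSecondKind (h3 : kPosSecondKind c R 3) :
    R (c 1) (c 2) (c 1) (c 2) < 5 * (R (c 0) (c 1) (c 0) (c 1) + R (c 0) (c 2) (c 0) (c 2)) := by
  have hpos := h3 (fun a => (testMatrices a).toBilin c.toBasis)
    (fun a => isTracelessSymForm_toBilin c (testMatrices_isSymm a) (testMatrices_trace a))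
    (fun a a' => (formInner_toBilin c _ _).trans (testMatrices_orthonormal a a'))
  rw [sum_secondKind_testMatrices c hR] at hpos
  linarith

end Dim3

theorem scalarCurv_div_twelve_lt_ricci (b : OrthonormalBasis (Fin 3) ℝ V)
    {R : V →ₗ[ℝ] V →ₗ[ℝ] V →ₗ[ℝ] V →ₗ[ℝ] ℝ} (hR : IsAlgCurvatureTensor R)
    (h3 : kPosSecondKind b R 3) {v : V} (hv : ‖v‖ = 1) :
    scalarCurv b R / 12 < ricci b R v v := by
  obtain ⟨c, rfl⟩ := b.exists_apply_eq 0 hv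
  rw [ricci_basis_change b c, scalarCurv_basis_change b c, ricci_apply_zero_zero c hR,
    scalarCurv_fin_three c hR]
  linarith [sectional_lt_of_kPosSecondKind c hR ((kPosSecondKind_basis_change b c R 3).1 h3)]

theorem stmt_0
    (b : OrthonormalBasis (Fin 3) ℝ V)
    (R : V →ₗ[ℝ] V →ₗ[ℝ] V →ₗ[ℝ] V →ₗ[ℝ] ℝ)
    (hR : IsAlgCurvatureTensor R)
    (h3 : kPosSecondKind b R 3) :
    0 < scalarCurv b R ∧
      ∀ v : V, ‖v‖ = 1 → scalarCurv b R / 12 < ricci b R v v := by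
  have hric : ∀ v : V, ‖v‖ = 1 → scalarCurv b R / 12 < ricci b R v v :=
    fun v hv => scalarCurv_div_twelve_lt_ricci b hR h3 hv
  refine ⟨?_, hric⟩
  have hS : ∑ i, ricci b R (b i) (b i) = scalarCurv b R := rfl
  have hsum : ∑ _i : Fin 3, scalarCurv b R / 12 < ∑ i, ricci b R (b i) (b i) :=
    Finset.sum_lt_sum_of_nonempty Finset.univ_nonempty fun i _ => hric _ (b.orthonormal.1 i)
  rw [hS, Finset.sum_const, Finset.card_univ, Fintype.card_fin, nsmul_eq_mul] at hsum
  linarith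
end

section
/- Let (V,⟨·,·⟩) be a 3-dimensional real inner product space and let R be an algebraic curvature tensor on V having 3-nonnegative curvature operator of the second kind. Then the scalar curvature S of R is nonnegative, and Ric(v,v) ≥ S/12 for every unit vector v ∈ V. -/
open scoped RealInnerProductSpace

variable {V : Type*} [NormedAddCommGroup V] [InnerProductSpace ℝ V]

/-!
Extend a unit vector `v` to an orthonormal basis `v, u, w` of the three-dimensional space `V` and
test `R̊` on the orthonormal traceless forms `(v ⊗ u + u ⊗ v)/√2`, `(v ⊗ w + w ⊗ v)/√2` and
`(g - 3 v ⊗ v)/√6`, where `g` is the inner product. Their Rayleigh quotients are `R(v,u,v,u)`,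
`R(v,w,v,w)` and `Ric(v,v) - S/6`, so 3-nonnegativity gives `2 Ric(v,v) - S/6 ≥ 0`. Summing
`Ric(e_i,e_i) ≥ S/12` over an orthonormal basis gives `S ≥ S/4`, i.e. `S ≥ 0`.
-/

lemma OrthonormalBasis.linearMap_apply_eq_sum {ι M : Type*} [Fintype ι] [AddCommMonoid M]
    [Module ℝ M] (b : OrthonormalBasis ι ℝ V) (T : V →ₗ[ℝ] M) (x : V) :
    T x = ∑ i, ⟪b i, x⟫ • T (b i) := by
  conv_lhs => rw [← b.sum_repr' x]
  simp only [map_sum, map_smul]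

lemma OrthonormalBasis.exists_apply_eq_s1 {ι : Type*} [Fintype ι] (b : OrthonormalBasis ι ℝ V)
    (i : ι) {v : V} (hv : ‖v‖ = 1) : ∃ c : OrthonormalBasis ι ℝ V, c i = v := by
  have : FiniteDimensional ℝ V := b.toBasis.finiteDimensional_of_finite
  have hv' : Orthonormal ℝ (({i} : Set ι).domRestrict fun _ => v) :=
    ⟨fun _ => hv, fun j k hjk => absurd (Subtype.ext (j.2.trans k.2.symm)) hjk⟩
  obtain ⟨c, hc⟩ := hv'.exists_orthonormalBasis_extension_of_card_eq
    (Module.finrank_eq_card_basis b.toBasis)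
  exact ⟨c, hc i rfl⟩

lemma OrthonormalBasis.sum_apply_self_eq {ι κ : Type*} [Fintype ι] [Fintype κ]
    (b : OrthonormalBasis ι ℝ V) (c : OrthonormalBasis κ ℝ V) (B : V →ₗ[ℝ] V →ₗ[ℝ] ℝ) :
    ∑ i, B (b i) (b i) = ∑ j, B (c j) (c j) := by
  calc ∑ i, B (b i) (b i) = ∑ i, ∑ j, ⟪c j, b i⟫ * B (c j) (b i) := by
        simp only [c.linearMap_apply_eq_sum B (b _), LinearMap.sum_apply, LinearMap.smul_apply,
          smul_eq_mul]
    _ = ∑ j, ∑ i, ⟪b i, c j⟫ * B (c j) (b i) := by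
        rw [Finset.sum_comm]
        simp only [real_inner_comm (b _)]
    _ = ∑ j, B (c j) (c j) := by
        simp only [← smul_eq_mul, ← b.linearMap_apply_eq_sum]

lemma Real.inv_sqrt_mul_inv_sqrt {x : ℝ} (hx : 0 ≤ x) : (√x)⁻¹ * (√x)⁻¹ = x⁻¹ := by
  rw [← mul_inv, Real.mul_self_sqrt hx]

noncomputable def tensorForm (u w : V) : V →ₗ[ℝ] V →ₗ[ℝ] ℝ :=
  (LinearMap.mul ℝ ℝ).compl₁₂ (innerₗ V u) (innerₗ V w)

@[simp] lemma tensorForm_apply (u w x y : V) : tensorForm u w x y = ⟪u, x⟫ * ⟪w, y⟫ := rfl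

lemma sum_tensorForm_self {ι : Type*} [Fintype ι] (b : OrthonormalBasis ι ℝ V) :
    ∑ i, tensorForm (b i) (b i) = innerₗ V := by
  ext x y
  simp only [LinearMap.sum_apply, tensorForm_apply, innerₗ_apply_apply, real_inner_comm x]
  exact b.sum_inner_mul_inner x y

noncomputable def symTensorForm (u w : V) : V →ₗ[ℝ] V →ₗ[ℝ] ℝ :=
  (√2)⁻¹ • (tensorForm u w + tensorForm w u)

noncomputable def tracelessRadialForm (v : V) : V →ₗ[ℝ] V →ₗ[ℝ] ℝ :=
  (√6)⁻¹ • (innerₗ V + (-3 : ℝ) • tensorForm v v)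

lemma IsAlgCurvatureTensor.apply_self_left_s1 {R : V →ₗ[ℝ] V →ₗ[ℝ] V →ₗ[ℝ] V →ₗ[ℝ] ℝ}
    (hR : IsAlgCurvatureTensor R) (x z w : V) : R x x z w = 0 := by
  linarith [hR.1 x x z w]

lemma IsAlgCurvatureTensor.apply_swap_right_s1 {R : V →ₗ[ℝ] V →ₗ[ℝ] V →ₗ[ℝ] V →ₗ[ℝ] ℝ}
    (hR : IsAlgCurvatureTensor R) (x y z w : V) : R x y z w = -R x y w z := by
  rw [hR.2.1, hR.1 z w, hR.2.1 w z]

section Basis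

variable {n : ℕ} (b : OrthonormalBasis (Fin n) ℝ V)

noncomputable def formInnerₗ : (V →ₗ[ℝ] V →ₗ[ℝ] ℝ) →ₗ[ℝ] (V →ₗ[ℝ] V →ₗ[ℝ] ℝ) →ₗ[ℝ] ℝ :=
  LinearMap.mk₂ ℝ (formInner b)
    (fun _ _ _ => by
      simp only [formInner, LinearMap.add_apply, add_mul, Finset.sum_add_distrib])
    (fun c _ _ => by
      simp only [formInner, LinearMap.smul_apply, smul_eq_mul, Finset.mul_sum, mul_assoc])
    (fun _ _ _ => by
      simp only [formInner, LinearMap.add_apply, mul_add, Finset.sum_add_distrib])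
    (fun c _ _ => by
      simp only [formInner, LinearMap.smul_apply, smul_eq_mul, Finset.mul_sum, mul_left_comm _ c])

lemma formInnerₗ_apply (φ ψ : V →ₗ[ℝ] V →ₗ[ℝ] ℝ) : formInnerₗ b φ ψ = formInner b φ ψ := rfl

lemma formInner_comm (φ ψ : V →ₗ[ℝ] V →ₗ[ℝ] ℝ) : formInner b φ ψ = formInner b ψ φ := by
  simp only [formInner, mul_comm]

lemma formInner_tensorForm (a d p q : V) :
    formInner b (tensorForm a d) (tensorForm p q) = ⟪a, p⟫ * ⟪d, q⟫ := by
  simp only [formInner, tensorForm_apply]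
  rw [← b.sum_inner_mul_inner a p, ← b.sum_inner_mul_inner d q, Finset.sum_mul_sum]
  simp only [real_inner_comm (b _) p, real_inner_comm (b _) q]
  exact Fintype.sum_congr _ _ fun i => Fintype.sum_congr _ _ fun j => by ring

lemma formInner_tensorForm_innerₗ (a d : V) :
    formInner b (tensorForm a d) (innerₗ V) = ⟪a, d⟫ := by
  rw [← sum_tensorForm_self b, ← formInnerₗ_apply, map_sum]
  simp only [formInnerₗ_apply, formInner_tensorForm, real_inner_comm (b _) d]
  exact b.sum_inner_mul_inner a d

lemma formInner_innerₗ_tensorForm (a d : V) :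
    formInner b (innerₗ V) (tensorForm a d) = ⟪a, d⟫ := by
  rw [formInner_comm, formInner_tensorForm_innerₗ]

lemma formInner_innerₗ_innerₗ : formInner b (innerₗ V) (innerₗ V) = n := by
  simp [formInner, b.inner_eq_ite]

lemma trace_tensorForm (a d : V) : ∑ i, tensorForm a d (b i) (b i) = ⟪a, d⟫ := by
  simp only [tensorForm_apply, real_inner_comm (b _) d]
  exact b.sum_inner_mul_inner a d

lemma trace_innerₗ : ∑ i, innerₗ V (b i) (b i) = n := by
  simp [b.orthonormal.1]

variable (R : V →ₗ[ℝ] V →ₗ[ℝ] V →ₗ[ℝ] V →ₗ[ℝ] ℝ)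

noncomputable def secondKindₗ : (V →ₗ[ℝ] V →ₗ[ℝ] ℝ) →ₗ[ℝ] (V →ₗ[ℝ] V →ₗ[ℝ] ℝ) →ₗ[ℝ] ℝ :=
  LinearMap.mk₂ ℝ (secondKind b R)
    (fun _ _ _ => by
      simp only [secondKind, LinearMap.add_apply, mul_add, add_mul, Finset.sum_add_distrib])
    (fun c _ _ => by
      simp only [secondKind, LinearMap.smul_apply, smul_eq_mul, Finset.mul_sum, mul_left_comm _ c,
        mul_assoc])
    (fun _ _ _ => by
      simp only [secondKind, LinearMap.add_apply, mul_add, Finset.sum_add_distrib])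
    (fun c _ _ => by
      simp only [secondKind, LinearMap.smul_apply, smul_eq_mul, Finset.mul_sum, mul_left_comm _ c,
        mul_assoc])

lemma secondKindₗ_apply (φ ψ : V →ₗ[ℝ] V →ₗ[ℝ] ℝ) :
    secondKindₗ b R φ ψ = secondKind b R φ ψ := rfl

lemma secondKind_tensorForm (a d p q : V) :
    secondKind b R (tensorForm a d) (tensorForm p q) = R a p q d := by
  simp only [b.linearMap_apply_eq_sum R a, b.linearMap_apply_eq_sum (R _) p,
    b.linearMap_apply_eq_sum (R _ _) q, b.linearMap_apply_eq_sum (R _ _ _) d, LinearMap.sum_apply,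
    LinearMap.smul_apply, smul_eq_mul, Finset.mul_sum, secondKind, tensorForm_apply]
  refine Fintype.sum_congr _ _ fun i => Fintype.sum_congr _ _ fun j =>
    Fintype.sum_congr _ _ fun k => Fintype.sum_congr _ _ fun l => ?_
  simp only [real_inner_comm (b _)]
  ring

lemma ricci_self_eq_of_orthonormalBasis {m : ℕ} (c : OrthonormalBasis (Fin m) ℝ V) (x : V) :
    ricci b R x x = ricci c R x x :=
  b.sum_apply_self_eq c ((R x).flip x)

lemma secondKind_innerₗ_tensorForm_self (hR : IsAlgCurvatureTensor R) (x : V) :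
    secondKind b R (innerₗ V) (tensorForm x x) = -ricci b R x x := by
  rw [← sum_tensorForm_self b, ← secondKindₗ_apply, LinearMap.map_sum₂]
  simp only [secondKindₗ_apply, secondKind_tensorForm, ricci, ← Finset.sum_neg_distrib,
    hR.1 (b _) x]

lemma secondKind_tensorForm_self_innerₗ (hR : IsAlgCurvatureTensor R) (x : V) :
    secondKind b R (tensorForm x x) (innerₗ V) = -ricci b R x x := by
  rw [← sum_tensorForm_self b, ← secondKindₗ_apply, map_sum]
  simp only [secondKindₗ_apply, secondKind_tensorForm, ricci, ← Finset.sum_neg_distrib,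
    hR.apply_swap_right_s1 x (b _) (b _) x]

lemma secondKind_innerₗ_innerₗ (hR : IsAlgCurvatureTensor R) :
    secondKind b R (innerₗ V) (innerₗ V) = -scalarCurv b R := by
  conv_lhs => rw [← sum_tensorForm_self b]
  rw [← secondKindₗ_apply, LinearMap.map_sum₂]
  have swap : ∀ x y : V, R x y y x = -R x y x y := fun x y => hR.apply_swap_right_s1 x y y x
  simp only [map_sum, secondKindₗ_apply, secondKind_tensorForm, scalarCurv,
    ← Finset.sum_neg_distrib, swap]

section TestForms

variable {u v w : V}

lemma isTracelessSymForm_symTensorForm (h : ⟪u, w⟫ = 0) :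
    IsTracelessSymForm b (symTensorForm u w) := by
  refine ⟨fun x y => ?_, ?_⟩
  · simp only [symTensorForm, LinearMap.smul_apply, LinearMap.add_apply, tensorForm_apply]
    ring
  · simp only [symTensorForm, LinearMap.smul_apply, LinearMap.add_apply, smul_eq_mul,
      ← Finset.mul_sum, Finset.sum_add_distrib, trace_tensorForm, real_inner_comm u w, h]
    ring

lemma formInner_symTensorForm_self (hu : ⟪u, u⟫ = 1) (hw : ⟪w, w⟫ = 1) (h : ⟪u, w⟫ = 0) :
    formInner b (symTensorForm u w) (symTensorForm u w) = 1 := by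
  rw [symTensorForm, ← formInnerₗ_apply]
  simp only [map_smul, map_add, LinearMap.smul_apply, LinearMap.add_apply, smul_eq_mul]
  simp only [formInnerₗ_apply, formInner_tensorForm, hu, hw, real_inner_comm u w, h]
  linear_combination 2 * Real.inv_sqrt_mul_inv_sqrt (zero_le_two (α := ℝ))

lemma formInner_symTensorForm_symTensorForm (hvw : ⟪v, w⟫ = 0) (huw : ⟪u, w⟫ = 0) :
    formInner b (symTensorForm v u) (symTensorForm v w) = 0 := by
  rw [symTensorForm, symTensorForm, ← formInnerₗ_apply]
  simp only [map_smul, map_add, LinearMap.smul_apply, LinearMap.add_apply, smul_eq_mul]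
  simp [formInnerₗ_apply, formInner_tensorForm, hvw, huw]

lemma isTracelessSymForm_tracelessRadialForm (b : OrthonormalBasis (Fin 3) ℝ V)
    (hv : ⟪v, v⟫ = 1) : IsTracelessSymForm b (tracelessRadialForm v) := by
  refine ⟨fun x y => ?_, ?_⟩
  · simp only [tracelessRadialForm, LinearMap.smul_apply, LinearMap.add_apply, tensorForm_apply,
      innerₗ_apply_apply, real_inner_comm x y]
    ring
  · simp only [tracelessRadialForm, LinearMap.smul_apply, LinearMap.add_apply, smul_eq_mul,
      ← Finset.mul_sum, Finset.sum_add_distrib, trace_tensorForm, trace_innerₗ, hv]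
    norm_num

lemma formInner_tracelessRadialForm_self (b : OrthonormalBasis (Fin 3) ℝ V) (hv : ⟪v, v⟫ = 1) :
    formInner b (tracelessRadialForm v) (tracelessRadialForm v) = 1 := by
  rw [tracelessRadialForm, ← formInnerₗ_apply]
  simp only [map_smul, map_add, LinearMap.smul_apply, LinearMap.add_apply, smul_eq_mul]
  simp only [formInnerₗ_apply, formInner_tensorForm, formInner_tensorForm_innerₗ,
    formInner_innerₗ_tensorForm, formInner_innerₗ_innerₗ, hv]
  linear_combination 6 * Real.inv_sqrt_mul_inv_sqrt (by norm_num : (0 : ℝ) ≤ 6)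

lemma formInner_symTensorForm_tracelessRadialForm (h : ⟪v, u⟫ = 0) :
    formInner b (symTensorForm v u) (tracelessRadialForm v) = 0 := by
  rw [symTensorForm, tracelessRadialForm, ← formInnerₗ_apply]
  simp only [map_smul, map_add, LinearMap.smul_apply, LinearMap.add_apply, smul_eq_mul]
  simp [formInnerₗ_apply, formInner_tensorForm, formInner_tensorForm_innerₗ, real_inner_comm v u,
    h]

lemma secondKind_symTensorForm_self (hR : IsAlgCurvatureTensor R) :
    secondKind b R (symTensorForm u w) (symTensorForm u w) = R u w u w := by
  rw [symTensorForm, ← secondKindₗ_apply]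
  simp only [map_smul, map_add, LinearMap.smul_apply, LinearMap.add_apply, smul_eq_mul]
  simp only [secondKindₗ_apply, secondKind_tensorForm, hR.apply_self_left_s1, hR.1 w u w u,
    hR.apply_swap_right_s1 u w w u]
  linear_combination 2 * R u w u w * Real.inv_sqrt_mul_inv_sqrt (zero_le_two (α := ℝ))

lemma secondKind_tracelessRadialForm_self (hR : IsAlgCurvatureTensor R) :
    secondKind b R (tracelessRadialForm v) (tracelessRadialForm v) =
      ricci b R v v - scalarCurv b R / 6 := by
  rw [tracelessRadialForm, ← secondKindₗ_apply]
  simp only [map_smul, map_add, LinearMap.smul_apply, LinearMap.add_apply, smul_eq_mul]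
  simp only [secondKindₗ_apply, secondKind_tensorForm, secondKind_innerₗ_innerₗ b R hR,
    secondKind_innerₗ_tensorForm_self b R hR, secondKind_tensorForm_self_innerₗ b R hR,
    hR.apply_self_left_s1]
  linear_combination (6 * ricci b R v v - scalarCurv b R) *
    Real.inv_sqrt_mul_inv_sqrt (by norm_num : (0 : ℝ) ≤ 6)

end TestForms

end Basis

lemma kNonnegSecondKind.sum_three_nonneg {n : ℕ} {b : OrthonormalBasis (Fin n) ℝ V}
    {R : V →ₗ[ℝ] V →ₗ[ℝ] V →ₗ[ℝ] V →ₗ[ℝ] ℝ} (h3 : kNonnegSecondKind b R 3)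
    {φ₀ φ₁ φ₂ : V →ₗ[ℝ] V →ₗ[ℝ] ℝ} (hφ₀ : IsTracelessSymForm b φ₀)
    (hφ₁ : IsTracelessSymForm b φ₁) (hφ₂ : IsTracelessSymForm b φ₂)
    (h₀₀ : formInner b φ₀ φ₀ = 1) (h₁₁ : formInner b φ₁ φ₁ = 1) (h₂₂ : formInner b φ₂ φ₂ = 1)
    (h₀₁ : formInner b φ₀ φ₁ = 0) (h₀₂ : formInner b φ₀ φ₂ = 0) (h₁₂ : formInner b φ₁ φ₂ = 0) :
    0 ≤ secondKind b R φ₀ φ₀ + secondKind b R φ₁ φ₁ + secondKind b R φ₂ φ₂ := by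
  have h := h3 ![φ₀, φ₁, φ₂] (fun a => by fin_cases a <;> assumption) fun a a' => by
    fin_cases a <;> fin_cases a' <;>
      simp [h₀₀, h₁₁, h₂₂, h₀₁, h₀₂, h₁₂, formInner_comm b φ₁ φ₀, formInner_comm b φ₂ φ₀,
        formInner_comm b φ₂ φ₁]
  simpa [Fin.sum_univ_three, add_assoc] using h

lemma scalarCurv_div_twelve_le_ricci {b : OrthonormalBasis (Fin 3) ℝ V}
    {R : V →ₗ[ℝ] V →ₗ[ℝ] V →ₗ[ℝ] V →ₗ[ℝ] ℝ} (hR : IsAlgCurvatureTensor R)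
    (h3 : kNonnegSecondKind b R 3) {v : V} (hv : ‖v‖ = 1) :
    scalarCurv b R / 12 ≤ ricci b R v v := by
  obtain ⟨c, rfl⟩ := b.exists_apply_eq_s1 0 hv
  have hric : ricci b R (c 0) (c 0) = R (c 0) (c 1) (c 0) (c 1) + R (c 0) (c 2) (c 0) (c 2) := by
    rw [ricci_self_eq_of_orthonormalBasis b R c, ricci, Fin.sum_univ_three, hR.apply_self_left_s1,
      zero_add]
  have unit := c.inner_eq_one
  have orth : ∀ {i j : Fin 3}, i ≠ j → ⟪c i, c j⟫ = 0 := c.inner_eq_zero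
  have h := h3.sum_three_nonneg (φ₀ := symTensorForm (c 0) (c 1))
    (φ₁ := symTensorForm (c 0) (c 2)) (φ₂ := tracelessRadialForm (c 0))
    (isTracelessSymForm_symTensorForm b (orth (by decide)))
    (isTracelessSymForm_symTensorForm b (orth (by decide)))
    (isTracelessSymForm_tracelessRadialForm b (unit 0))
    (formInner_symTensorForm_self b (unit 0) (unit 1) (orth (by decide)))
    (formInner_symTensorForm_self b (unit 0) (unit 2) (orth (by decide)))
    (formInner_tracelessRadialForm_self b (unit 0))
    (formInner_symTensorForm_symTensorForm b (orth (by decide)) (orth (by decide)))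
    (formInner_symTensorForm_tracelessRadialForm b (orth (by decide)))
    (formInner_symTensorForm_tracelessRadialForm b (orth (by decide)))
  rw [secondKind_symTensorForm_self b R hR, secondKind_symTensorForm_self b R hR,
    secondKind_tracelessRadialForm_self b R hR] at h
  linarith

theorem stmt_1
    (b : OrthonormalBasis (Fin 3) ℝ V)
    (R : V →ₗ[ℝ] V →ₗ[ℝ] V →ₗ[ℝ] V →ₗ[ℝ] ℝ)
    (hR : IsAlgCurvatureTensor R)
    (h3 : kNonnegSecondKind b R 3) :
    0 ≤ scalarCurv b R ∧
      ∀ v : V, ‖v‖ = 1 → scalarCurv b R / 12 ≤ ricci b R v v := by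
  have hric : ∀ v : V, ‖v‖ = 1 → scalarCurv b R / 12 ≤ ricci b R v v :=
    fun v hv => scalarCurv_div_twelve_le_ricci hR h3 hv
  refine ⟨?_, hric⟩
  have hS : scalarCurv b R = ∑ i, ricci b R (b i) (b i) := rfl
  have h₀ := hric (b 0) (b.orthonormal.1 0)
  have h₁ := hric (b 1) (b.orthonormal.1 1)
  have h₂ := hric (b 2) (b.orthonormal.1 2)
  rw [Fin.sum_univ_three] at hS
  linarith
end

section
/- Let (V,⟨·,·⟩) be a real inner product space of dimension n ≥ 4 and let R be an algebraic curvature tensor on V. Then R has ((n-1)(n+2)/2)-positive curvature operator of the second kind if and only if the scalar curvature S of R is positive. -/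
open scoped RealInnerProductSpace

variable {V : Type*} [NormedAddCommGroup V] [InnerProductSpace ℝ V]

/-!
Identify a bilinear form with its matrix `(φ (b i) (b j))` in `EuclideanSpace ℝ (Fin n × Fin n)`,
where the inner product is `formInner`. Traceless symmetric matrices form a subspace of dimension
`(n - 1) (n + 2) / 2`, so an orthonormal family of that many traceless symmetric forms is an
orthonormal basis of it, and `∑ₐ R̊(φₐ, φₐ)` is the trace of `R̊` there, the same for every such
family. By Parseval, `∑ₐ φₐ(i,l) φₐ(j,k)` is the `(i,l)` entry of the projection of the matrix unit
`E_jk` onto that subspace, and contracting this explicit tensor with `R` gives `(1/2 + 1/n) S`.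
-/

open Module

theorem Orthonormal.sum_inner_mul_inner_of_card_eq_finrank {𝕜 E ι : Type*} [RCLike 𝕜]
    [NormedAddCommGroup E] [InnerProductSpace 𝕜 E] [FiniteDimensional 𝕜 E] [Fintype ι]
    {v : ι → E} (hv : Orthonormal 𝕜 v) (hcard : Fintype.card ι = finrank 𝕜 E) (x y : E) :
    ∑ i, inner 𝕜 x (v i) * inner 𝕜 (v i) y = inner 𝕜 x y := by
  simpa using (OrthonormalBasis.mk hv
    (hv.linearIndependent.span_eq_top_of_card_eq_finrank' hcard).ge).sum_inner_mul_inner x y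

namespace SecondKind

abbrev Mat (n : ℕ) := EuclideanSpace ℝ (Fin n × Fin n)

lemma inner_mat {n : ℕ} (v w : Mat n) : ⟪v, w⟫ = ∑ i, ∑ j, v (i, j) * w (i, j) := by
  simp [PiLp.inner_apply, Fintype.sum_prod_type, mul_comm]

def tracelessSymm (n : ℕ) : Submodule ℝ (Mat n) where
  carrier := {v | (∀ i j, v (i, j) = v (j, i)) ∧ ∑ i, v (i, i) = 0}
  add_mem' hx hy := ⟨fun i j => by simp [hx.1 i j, hy.1 i j],
    by simp [Finset.sum_add_distrib, hx.2, hy.2]⟩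
  zero_mem' := ⟨fun _ _ => rfl, by simp⟩
  smul_mem' c x hx := ⟨fun i j => by simp [hx.1 i j], by simp [← Finset.mul_sum, hx.2]⟩

def diagSum (n : ℕ) : (Sym2 (Fin n) → ℝ) →ₗ[ℝ] ℝ :=
  ∑ i, LinearMap.proj (Sym2.diag i)

lemma diagSum_surjective {n : ℕ} [NeZero n] : Function.Surjective (diagSum n) := fun c =>
  ⟨Pi.single (Sym2.diag 0) c, by simp [diagSum, Pi.single_apply, Sym2.diag_injective.eq_iff]⟩

def tracelessSymmEquivKer (n : ℕ) : tracelessSymm n ≃ₗ[ℝ] LinearMap.ker (diagSum n) where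
  toFun v := ⟨Sym2.lift ⟨fun i j => v.1 (i, j), v.2.1⟩, by simpa [diagSum, Sym2.diag] using v.2.2⟩
  invFun f := ⟨WithLp.toLp 2 fun p => f.1 s(p.1, p.2),
    fun i j => by simp [Sym2.eq_swap], by simpa [diagSum, Sym2.diag] using f.2⟩
  map_add' v w := by ext z; induction z using Sym2.ind; simp
  map_smul' c v := by ext z; induction z using Sym2.ind; simp
  left_inv v := by ext; simp
  right_inv f := by ext z; induction z using Sym2.ind; simp

lemma finrank_tracelessSymm (n : ℕ) : finrank ℝ (tracelessSymm n) = (n - 1) * (n + 2) / 2 := by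
  rcases n with _ | m
  · exact finrank_zero_of_subsingleton
  have hrank := (diagSum (m + 1)).finrank_range_add_finrank_ker
  rw [LinearMap.range_eq_top.2 diagSum_surjective, finrank_top, finrank_self, finrank_pi,
    Sym2.card, Fintype.card_fin, Nat.choose_two_right] at hrank
  rw [(tracelessSymmEquivKer (m + 1)).finrank_eq]
  have hsq : (m + 1 + 1) * (m + 1) = m * (m + 1 + 2) + 2 := by ring
  simp only [Nat.add_sub_cancel] at hrank ⊢
  omega

/-- The orthogonal projection onto `tracelessSymm n` of the matrix unit `E_jk`: symmetrize, then
remove the trace. -/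
noncomputable def projUnit (n : ℕ) (j k : Fin n) : Mat n :=
  WithLp.toLp 2 fun p => ((if p = (j, k) then 1 else 0) + (if p = (k, j) then 1 else 0)) / 2
      - if p.1 = p.2 ∧ j = k then (n : ℝ)⁻¹ else 0

lemma projUnit_apply {n : ℕ} (j k i l : Fin n) :
    projUnit n j k (i, l) =
      ((if i = j ∧ l = k then 1 else 0) + (if i = k ∧ l = j then 1 else 0)) / 2
        - if i = l ∧ j = k then (n : ℝ)⁻¹ else 0 := by
  simp [projUnit]

lemma projUnit_mem {n : ℕ} (j k : Fin n) : projUnit n j k ∈ tracelessSymm n := by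
  have : NeZero n := ⟨(Fin.pos j).ne'⟩
  refine ⟨fun i l => ?_, ?_⟩
  · simp only [projUnit_apply]
    grind
  · simp only [projUnit_apply]
    by_cases h : j = k
    · subst h
      simp [Finset.sum_sub_distrib]
    · exact Finset.sum_eq_zero fun x _ => by grind

lemma inner_projUnit {n : ℕ} (j k : Fin n) {w : Mat n} (hw : w ∈ tracelessSymm n) :
    ⟪projUnit n j k, w⟫ = w (j, k) := by
  obtain ⟨hsymm, htrace⟩ := hw
  simp [inner_mat, projUnit_apply, sub_mul, add_mul, add_div, ite_and, ite_div, ite_mul,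
    Finset.sum_add_distrib, Finset.sum_sub_distrib, ← Finset.mul_sum, htrace, hsymm k j]
  ring

lemma sum_mul_eq_projUnit {n : ℕ} {ι : Type*} [Fintype ι] {m : ι → Mat n}
    (hm : ∀ a, m a ∈ tracelessSymm n) (hon : Orthonormal ℝ m)
    (hcard : Fintype.card ι = finrank ℝ (tracelessSymm n)) (i j k l : Fin n) :
    ∑ a, m a (i, l) * m a (j, k) = projUnit n j k (i, l) := by
  let v a : tracelessSymm n := ⟨m a, hm a⟩
  have hv : Orthonormal ℝ v := (tracelessSymm n).subtypeₗᵢ.orthonormal_comp_iff.1 hon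
  calc ∑ a, m a (i, l) * m a (j, k)
      = ∑ a, ⟪projUnit n i l, m a⟫ * ⟪m a, projUnit n j k⟫ := by
        simp only [real_inner_comm (projUnit n j k), inner_projUnit _ _ (hm _)]
    _ = ⟪projUnit n i l, projUnit n j k⟫ :=
        hv.sum_inner_mul_inner_of_card_eq_finrank hcard ⟨_, projUnit_mem i l⟩ ⟨_, projUnit_mem j k⟩
    _ = projUnit n j k (i, l) := inner_projUnit i l (projUnit_mem j k)

section Curvature

variable {n : ℕ} (Rc : Fin n → Fin n → Fin n → Fin n → ℝ)

lemma sum_mul_projUnit (hanti : ∀ i j k l, Rc i j k l = - Rc j i k l)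
    (hpair : ∀ i j k l, Rc i j k l = Rc k l i j) :
    ∑ i, ∑ j, ∑ k, ∑ l, Rc i j k l * projUnit n j k (i, l)
      = (2⁻¹ + (n : ℝ)⁻¹) * ∑ i, ∑ j, Rc i j i j := by
  have hdiag : ∀ i k l, Rc i i k l = 0 := fun i k l => by linarith [hanti i i k l]
  have hswap : ∀ i j, Rc i j j i = - Rc i j i j := fun i j => by rw [hpair, hanti]
  simp [projUnit_apply, mul_sub, mul_add, add_div, ite_div, ite_and, mul_ite,
    Finset.sum_add_distrib, Finset.sum_sub_distrib, hdiag, hswap]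
  simp only [← Finset.sum_mul]
  ring

lemma sum_curvature_of_orthonormal (hanti : ∀ i j k l, Rc i j k l = - Rc j i k l)
    (hpair : ∀ i j k l, Rc i j k l = Rc k l i j) {ι : Type*} [Fintype ι] {m : ι → Mat n}
    (hm : ∀ a, m a ∈ tracelessSymm n) (hon : Orthonormal ℝ m)
    (hcard : Fintype.card ι = finrank ℝ (tracelessSymm n)) :
    ∑ a, ∑ i, ∑ j, ∑ k, ∑ l, Rc i j k l * m a (i, l) * m a (j, k)
      = (2⁻¹ + (n : ℝ)⁻¹) * ∑ i, ∑ j, Rc i j i j := by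
  simp_rw [← sum_mul_projUnit Rc hanti hpair, ← sum_mul_eq_projUnit hm hon hcard, Finset.mul_sum,
    mul_assoc]
  rw [Finset.sum_comm]
  refine Finset.sum_congr rfl fun i _ => ?_
  rw [Finset.sum_comm]
  refine Finset.sum_congr rfl fun j _ => ?_
  rw [Finset.sum_comm]
  refine Finset.sum_congr rfl fun k _ => ?_
  rw [Finset.sum_comm]

end Curvature

section Forms

variable {n : ℕ} (b : OrthonormalBasis (Fin n) ℝ V)

noncomputable def formMat (φ : V →ₗ[ℝ] V →ₗ[ℝ] ℝ) : Mat n :=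
  WithLp.toLp 2 fun p => φ (b p.1) (b p.2)

noncomputable def matForm (w : Mat n) : V →ₗ[ℝ] V →ₗ[ℝ] ℝ :=
  Matrix.toLinearMap₂ b.toBasis b.toBasis fun i j => w (i, j)

lemma matForm_apply_basis (w : Mat n) (i j : Fin n) : matForm b w (b i) (b j) = w (i, j) := by
  simpa [matForm] using Matrix.toLinearMap₂_apply_basis b.toBasis b.toBasis (fun i j => w (i, j)) i j

lemma formMat_matForm (w : Mat n) : formMat b (matForm b w) = w := by
  ext p
  exact matForm_apply_basis b w p.1 p.2

lemma isTracelessSymForm_iff_formMat_mem {φ : V →ₗ[ℝ] V →ₗ[ℝ] ℝ} :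
    IsTracelessSymForm b φ ↔ formMat b φ ∈ tracelessSymm n := by
  refine ⟨fun h => ⟨fun i j => h.1 _ _, h.2⟩, fun h => ⟨fun x y => ?_, h.2⟩⟩
  have : φ = φ.flip := LinearMap.ext_basis b.toBasis b.toBasis fun i j => h.1 i j
  exact LinearMap.congr_fun₂ this x y

lemma formInner_eq_inner (φ ψ : V →ₗ[ℝ] V →ₗ[ℝ] ℝ) :
    formInner b φ ψ = ⟪formMat b φ, formMat b ψ⟫ := by
  simp [formInner, inner_mat, formMat]

lemma sum_secondKind_eq_of_orthonormal {R : V →ₗ[ℝ] V →ₗ[ℝ] V →ₗ[ℝ] V →ₗ[ℝ] ℝ}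
    (hR : IsAlgCurvatureTensor R) {ι : Type*} [Fintype ι] [DecidableEq ι]
    {φ : ι → V →ₗ[ℝ] V →ₗ[ℝ] ℝ} (hφ : ∀ a, IsTracelessSymForm b (φ a))
    (hon : ∀ a a', formInner b (φ a) (φ a') = if a = a' then 1 else 0)
    (hcard : Fintype.card ι = (n - 1) * (n + 2) / 2) :
    ∑ a, secondKind b R (φ a) (φ a) = (2⁻¹ + (n : ℝ)⁻¹) * scalarCurv b R := by
  have hmat := sum_curvature_of_orthonormal (fun i j k l => R (b i) (b j) (b k) (b l))
    (fun _ _ _ _ => hR.1 _ _ _ _) (fun _ _ _ _ => hR.2.1 _ _ _ _)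
    (fun a => (isTracelessSymForm_iff_formMat_mem b).1 (hφ a))
    (orthonormal_iff_ite.2 fun a a' => (formInner_eq_inner b _ _).symm.trans (hon a a'))
    (hcard.trans (finrank_tracelessSymm n).symm)
  exact hmat

lemma exists_orthonormal_tracelessSymForms :
    ∃ φ : Fin ((n - 1) * (n + 2) / 2) → V →ₗ[ℝ] V →ₗ[ℝ] ℝ, (∀ a, IsTracelessSymForm b (φ a)) ∧
      ∀ a a', formInner b (φ a) (φ a') = if a = a' then 1 else 0 := by
  let e := (stdOrthonormalBasis ℝ (tracelessSymm n)).reindex (finCongr (finrank_tracelessSymm n))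
  refine ⟨fun a => matForm b (e a), fun a => ?_, fun a a' => ?_⟩
  · rw [isTracelessSymForm_iff_formMat_mem, formMat_matForm]
    exact (e a).2
  · rw [formInner_eq_inner, formMat_matForm, formMat_matForm, ← Submodule.coe_inner]
    exact orthonormal_iff_ite.1 e.orthonormal a a'

end Forms

end SecondKind

open SecondKind in
theorem stmt_5_general {n : ℕ}
    (b : OrthonormalBasis (Fin n) ℝ V)
    (R : V →ₗ[ℝ] V →ₗ[ℝ] V →ₗ[ℝ] V →ₗ[ℝ] ℝ)
    (hR : IsAlgCurvatureTensor R) :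
    kPosSecondKind b R ((n - 1) * (n + 2) / 2) ↔ 0 < scalarCurv b R := by
  have htrace := fun φ hφ hon => sum_secondKind_eq_of_orthonormal b hR (φ := φ) hφ hon
    (Fintype.card_fin _)
  refine ⟨fun hpos => ?_, fun hS φ hφ hon => ?_⟩
  · obtain ⟨φ, hφ, hon⟩ := exists_orthonormal_tracelessSymForms b
    have hsum := hpos φ hφ hon
    rw [htrace φ hφ hon] at hsum
    exact pos_of_mul_pos_right hsum (by positivity)
  · rw [htrace φ hφ hon]
    positivity

theorem stmt_5 {n : ℕ} (hn : 4 ≤ n)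
    (b : OrthonormalBasis (Fin n) ℝ V)
    (R : V →ₗ[ℝ] V →ₗ[ℝ] V →ₗ[ℝ] V →ₗ[ℝ] ℝ)
    (hR : IsAlgCurvatureTensor R) :
    kPosSecondKind b R ((n - 1) * (n + 2) / 2) ↔ 0 < scalarCurv b R :=
  stmt_5_general b R hR
end
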